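/- arXiv:1508.00649 — 5 statements merged into one kernel-verified Lean document; each statement's English description precedes it below -/
import Mathlib

section
/- Let Λ ⊆ ℂ^(2n) be a ℂ-Lagrangian subspace and Σ ⊆ ℂ^(2n) an I-Lagrangian R-symplectic real subspace with associated antilinear involution Γ. Then the Hermitian form b(X,Y) = (1/i) σ(X, ΓY) on Λ is nondegenerate if and only if Λ ∩ Σ = {0}. -/
open scoped BigOperators

noncomputable def dotC {n : ℕ} (x y : Fin n → ℂ) : ℂ := ∑ j, x j * y j

noncomputable def sigmaC {n : ℕ} (X Y : (Fin n → ℂ) × (Fin n → ℂ)) : ℂ :=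
  dotC X.2 Y.1 - dotC X.1 Y.2

lemma sigmaC_add_left {n : ℕ} (X Y Z : (Fin n → ℂ) × (Fin n → ℂ)) :
    sigmaC (X + Y) Z = sigmaC X Z + sigmaC Y Z := by
  simp only [sigmaC, dotC, Prod.fst_add, Prod.snd_add, Pi.add_apply, add_mul,
    Finset.sum_add_distrib]
  ring

lemma sigmaC_add_right {n : ℕ} (X Y Z : (Fin n → ℂ) × (Fin n → ℂ)) :
    sigmaC X (Y + Z) = sigmaC X Y + sigmaC X Z := by
  simp only [sigmaC, dotC, Prod.fst_add, Prod.snd_add, Pi.add_apply, mul_add,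
    Finset.sum_add_distrib]
  ring

lemma sigmaC_smul_left {n : ℕ} (c : ℂ) (X Z : (Fin n → ℂ) × (Fin n → ℂ)) :
    sigmaC (c • X) Z = c * sigmaC X Z := by
  simp only [sigmaC, dotC, Prod.smul_fst, Prod.smul_snd, Pi.smul_apply, smul_eq_mul,
    mul_assoc, ← Finset.mul_sum]
  ring

lemma sigmaC_smul_right {n : ℕ} (c : ℂ) (X Z : (Fin n → ℂ) × (Fin n → ℂ)) :
    sigmaC X (c • Z) = c * sigmaC X Z := by
  simp only [sigmaC, dotC, Prod.smul_fst, Prod.smul_snd, Pi.smul_apply, smul_eq_mul]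
  rw [show ∀ f g : Fin n → ℂ, ∑ j, f j * (c * g j) = c * ∑ j, f j * g j by
    intro f g; rw [Finset.mul_sum]; exact Finset.sum_congr rfl fun j _ => by ring]
  rw [show ∀ f g : Fin n → ℂ, ∑ j, f j * (c * g j) = c * ∑ j, f j * g j by
    intro f g; rw [Finset.mul_sum]; exact Finset.sum_congr rfl fun j _ => by ring]
  ring

lemma sigmaC_skew {n : ℕ} (X Y : (Fin n → ℂ) × (Fin n → ℂ)) :
    sigmaC X Y = - sigmaC Y X := by
  simp only [sigmaC, dotC]
  rw [show ∑ j, X.2 j * Y.1 j = ∑ j, Y.1 j * X.2 j from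
    Finset.sum_congr rfl fun j _ => mul_comm _ _]
  rw [show ∑ j, X.1 j * Y.2 j = ∑ j, Y.2 j * X.1 j from
    Finset.sum_congr rfl fun j _ => mul_comm _ _]
  ring

noncomputable def Bform (n : ℕ) :
    LinearMap.BilinForm ℂ ((Fin n → ℂ) × (Fin n → ℂ)) :=
  LinearMap.mk₂ ℂ sigmaC sigmaC_add_left sigmaC_smul_left sigmaC_add_right sigmaC_smul_right

lemma Bform_apply {n : ℕ} (X Y : (Fin n → ℂ) × (Fin n → ℂ)) :
    Bform n X Y = sigmaC X Y := rfl

lemma Bform_refl {n : ℕ} : (Bform n).IsRefl := by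
  intro x y h
  rw [Bform_apply, sigmaC_skew, ← Bform_apply, h, neg_zero]

lemma dotC_single {n : ℕ} (x : Fin n → ℂ) (j : Fin n) :
    dotC x (Pi.single j 1) = x j := by
  simp [dotC, Pi.single_apply, mul_ite, Finset.sum_ite_eq']

lemma dotC_zero {n : ℕ} (x : Fin n → ℂ) : dotC x 0 = 0 := by simp [dotC]

lemma Bform_nondeg {n : ℕ} : (Bform n).Nondegenerate := by
  refine (LinearMap.IsRefl.nondegenerate_iff_separatingLeft Bform_refl).2 ?_
  intro X hX
  have h2 : ∀ j, X.2 j = 0 := by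
    intro j
    have := hX (Pi.single j 1, 0)
    simpa [Bform_apply, sigmaC, dotC_single, dotC_zero] using this
  have h1 : ∀ j, X.1 j = 0 := by
    intro j
    have := hX (0, Pi.single j 1)
    simp [Bform_apply, sigmaC, dotC_single, dotC_zero] at this
    simpa using this
  have : X = (X.1, X.2) := rfl
  rw [this, Prod.mk_eq_zero]
  exact ⟨funext h1, funext h2⟩

/-- For a ℂ-Lagrangian `Λ` and an I-Lagrangian, R-symplectic `S` with antilinear
involution `Γ` fixing `S`, the Hermitian form `b(X,Y) = (1/i)σ(X, ΓY)` is nondegenerate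
on `Λ` if and only if `Λ ∩ S = {0}`. -/
theorem stmt5 {n : ℕ}
    (Λ : Submodule ℂ ((Fin n → ℂ) × (Fin n → ℂ)))
    (hΛdim : Module.finrank ℂ Λ = n)
    (hLag : ∀ X ∈ Λ, ∀ Y ∈ Λ, sigmaC X Y = 0)
    (S : Submodule ℝ ((Fin n → ℂ) × (Fin n → ℂ)))
    (hdim : Module.finrank ℝ S = 2 * n)
    (hI : ∀ X ∈ S, ∀ Y ∈ S, (sigmaC X Y).im = 0)
    (hR : ∀ X ∈ S, (∀ Y ∈ S, (sigmaC X Y).re = 0) → X = 0)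
    (Γ : ((Fin n → ℂ) × (Fin n → ℂ)) →ₗ[ℝ] ((Fin n → ℂ) × (Fin n → ℂ)))
    (hanti : ∀ (c : ℂ) v, Γ (c • v) = (starRingEnd ℂ c) • Γ v)
    (hinv : ∀ v, Γ (Γ v) = v)
    (hfix : ∀ x ∈ S, Γ x = x) :
    (∀ X ∈ Λ, (∀ Y ∈ Λ, Complex.I⁻¹ * sigmaC X (Γ Y) = 0) → X = 0) ↔
      (∀ X, X ∈ Λ → X ∈ S → X = 0) := by
  classical
  -- the fixed subspace of Γ
  set F : Submodule ℝ ((Fin n → ℂ) × (Fin n → ℂ)) := LinearMap.ker (Γ - LinearMap.id) with hF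
  have hmemF : ∀ x : (Fin n → ℂ) × (Fin n → ℂ), x ∈ F ↔ Γ x = x := by
    intro x
    simp [hF, LinearMap.mem_ker, LinearMap.sub_apply, sub_eq_zero]
  -- the linear equivalence F × F ≃ V
  have hGamA : ∀ v : (Fin n → ℂ) × (Fin n → ℂ), Γ ((2⁻¹ : ℂ) • (v + Γ v)) = (2⁻¹ : ℂ) • (v + Γ v) := by
    intro v
    rw [hanti, map_add, hinv]
    have : (starRingEnd ℂ) (2⁻¹ : ℂ) = (2⁻¹ : ℂ) := by
      rw [map_inv₀, map_ofNat]
    rw [this, add_comm (Γ v) v]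
  have hGamB : ∀ v : (Fin n → ℂ) × (Fin n → ℂ),
      Γ ((Complex.I / 2) • (Γ v - v)) = (Complex.I / 2) • (Γ v - v) := by
    intro v
    rw [hanti, map_sub, hinv]
    have h1 : (starRingEnd ℂ) (Complex.I / 2) = -(Complex.I / 2) := by
      rw [map_div₀, map_ofNat, Complex.conj_I, neg_div]
    rw [h1]
    module
  have hEquiv : Nonempty ((F × F) ≃ₗ[ℝ] ((Fin n → ℂ) × (Fin n → ℂ))) := by
    refine ⟨{ toFun := fun p => (p.1 : (Fin n → ℂ) × (Fin n → ℂ)) + Complex.I • (p.2 : (Fin n → ℂ) × (Fin n → ℂ))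
              map_add' := ?_
              map_smul' := ?_
              invFun := fun v =>
                (⟨(2⁻¹ : ℂ) • (v + Γ v), (hmemF _).2 (hGamA v)⟩,
                 ⟨(Complex.I / 2) • (Γ v - v), (hmemF _).2 (hGamB v)⟩)
              left_inv := ?_
              right_inv := ?_ }⟩
    · intro p q
      simp only [Submodule.coe_add, Prod.fst_add, Prod.snd_add, smul_add]
      module
    · intro c p
      simp only [Prod.smul_fst, Prod.smul_snd, SetLike.val_smul, RingHom.id_apply]
      rw [smul_comm]
      module
    · rintro ⟨⟨a, ha⟩, ⟨b, hb⟩⟩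
      have hga : Γ a = a := (hmemF a).1 ha
      have hgb : Γ b = b := (hmemF b).1 hb
      have hgI : Γ (a + Complex.I • b) = a - Complex.I • b := by
        rw [map_add, hanti, hga, hgb, Complex.conj_I]
        module
      refine Prod.ext (Subtype.ext ?_) (Subtype.ext ?_)
      · show (2⁻¹ : ℂ) • ((a + Complex.I • b) + Γ (a + Complex.I • b)) = a
        rw [hgI]; match_scalars <;> (ring_nf; try norm_num [Complex.I_sq, Complex.I_mul_I])
      · show (Complex.I / 2) • (Γ (a + Complex.I • b) - (a + Complex.I • b)) = b
        rw [hgI]; match_scalars <;> (ring_nf; try norm_num [Complex.I_sq, Complex.I_mul_I])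
    · intro v
      simp only
      match_scalars <;> (ring_nf; try norm_num [Complex.I_sq, Complex.I_mul_I])
  obtain ⟨e⟩ := hEquiv
  -- dimension count : finrank ℝ F = 2 n and S = F
  have hVdim : Module.finrank ℝ ((Fin n → ℂ) × (Fin n → ℂ)) = 4 * n := by
    simp only [Module.finrank_prod, Module.finrank_pi_fintype, Complex.finrank_real_complex,
      Finset.sum_const, Finset.card_univ, Fintype.card_fin, smul_eq_mul]
    omega
  have hFdim : Module.finrank ℝ F = 2 * n := by
    have h1 := e.finrank_eq
    rw [Module.finrank_prod, hVdim] at h1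
    omega
  have hSF : S = F := by
    have hle : S ≤ F := fun x hx => (hmemF x).2 (hfix x hx)
    exact Submodule.eq_of_le_of_finrank_le hle (by rw [hFdim, hdim])
  have hmemS : ∀ x : (Fin n → ℂ) × (Fin n → ℂ), x ∈ S ↔ Γ x = x := by
    intro x; rw [hSF]; exact hmemF x
  -- decomposition of a vector over S
  have decomp : ∀ v : (Fin n → ℂ) × (Fin n → ℂ), ∃ a ∈ S, ∃ b ∈ S,
      v = a + Complex.I • b ∧ Γ v = a + (-Complex.I) • b := by
    intro v
    refine ⟨(2⁻¹ : ℂ) • (v + Γ v), (hmemS _).2 (hGamA v),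
      (Complex.I / 2) • (Γ v - v), (hmemS _).2 (hGamB v), ?_, ?_⟩
    · match_scalars <;> (ring_nf; try norm_num [Complex.I_sq, Complex.I_mul_I])
    · match_scalars <;> (ring_nf; try norm_num [Complex.I_sq, Complex.I_mul_I])
  -- realness of sigma on S
  have hreal : ∀ a ∈ S, ∀ b ∈ S, (starRingEnd ℂ) (sigmaC a b) = sigmaC a b := by
    intro a ha b hb
    exact Complex.conj_eq_iff_im.2 (hI a ha b hb)
  -- the key conjugation identity
  have key : ∀ v w : (Fin n → ℂ) × (Fin n → ℂ), sigmaC (Γ v) (Γ w) = (starRingEnd ℂ) (sigmaC v w) := by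
    intro v w
    obtain ⟨a, ha, b, hb, hv, hgv⟩ := decomp v
    obtain ⟨c, hc, d, hd, hw, hgw⟩ := decomp w
    rw [hgv, hgw, hv, hw]
    simp only [sigmaC_add_left, sigmaC_add_right, sigmaC_smul_left, sigmaC_smul_right,
      map_add, map_mul, Complex.conj_I, map_neg]
    rw [hreal a ha c hc, hreal a ha d hd, hreal b hb c hc, hreal b hb d hd]
    try ring
  -- the orthogonal of Λ is Λ
  have hVdimC : Module.finrank ℂ ((Fin n → ℂ) × (Fin n → ℂ)) = 2 * n := by
    simp only [Module.finrank_prod, Module.finrank_fintype_fun_eq_card, Fintype.card_fin]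
    omega
  have horth : (Bform n).orthogonal Λ = Λ := by
    have hle : Λ ≤ (Bform n).orthogonal Λ := by
      intro y hy
      intro x hx
      exact hLag x hx y hy
    refine (Submodule.eq_of_le_of_finrank_le hle ?_).symm
    rw [LinearMap.BilinForm.finrank_orthogonal Bform_nondeg, hVdimC, hΛdim]
    omega
  constructor
  · -- nondegenerate → trivial intersection
    intro hnd X hXΛ hXS
    refine hnd X hXΛ ?_
    intro Y hY
    have h1 : (starRingEnd ℂ) (sigmaC X (Γ Y)) = 0 := by
      rw [← key, hfix X hXS, hinv]
      exact hLag X hXΛ Y hY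
    have h2 : sigmaC X (Γ Y) = 0 := by
      rw [← Complex.conj_conj (sigmaC X (Γ Y)), h1, map_zero]
    rw [h2, mul_zero]
  · -- trivial intersection → nondegenerate
    intro hdisj X hXΛ h0
    have h0' : ∀ Y ∈ Λ, sigmaC X (Γ Y) = 0 := by
      intro Y hY
      have := h0 Y hY
      rcases mul_eq_zero.1 this with h | h
      · exact absurd h (by simp [Complex.I_ne_zero])
      · exact h
    -- Γ X lies in the orthogonal of Λ, hence in Λ
    have hGXΛ : Γ X ∈ Λ := by
      rw [← horth]
      intro y hy
      show Bform n y (Γ X) = 0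
      rw [Bform_apply, sigmaC_skew]
      have : sigmaC (Γ X) y = 0 := by
        rw [← hinv y, key, h0' y hy, map_zero]
      rw [this, neg_zero]
    obtain ⟨a, ha, b, hb, hv, hgv⟩ := decomp X
    have h2a : X + Γ X = (2 : ℂ) • a := by rw [hgv]; rw [hv]; module
    have h2b : X - Γ X = (2 * Complex.I) • b := by rw [hgv]; rw [hv]; module
    have haΛ : a ∈ Λ := by
      have : a = (2⁻¹ : ℂ) • (X + Γ X) := by rw [h2a]; module
      rw [this]
      exact Λ.smul_mem _ (Λ.add_mem hXΛ hGXΛ)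
    have hbΛ : b ∈ Λ := by
      have : b = ((2 * Complex.I)⁻¹ : ℂ) • (X - Γ X) := by
        rw [h2b, smul_smul, inv_mul_cancel₀ (by simp [Complex.I_ne_zero]), one_smul]
      rw [this]
      exact Λ.smul_mem _ (Λ.sub_mem hXΛ hGXΛ)
    have ha0 : a = 0 := hdisj a haΛ ha
    have hb0 : b = 0 := hdisj b hbΛ hb
    rw [hv, ha0, hb0, smul_zero, add_zero]
end

section
/- Let F₊, F₋ be complex symmetric n×n matrices with Im F₊ positive definite and Im F₋ negative definite. Then F₊ − F₋ is invertible, and for any invertible n×n matrix B, the quadratic form φ(x,y) = (1/2)Bᵗ(F₊ − F₋)⁻¹Bx·x + Bx·y − (1/2)F₋ y·y satisfies: det φ''_{xy} ≠ 0, Im φ''_{yy} > 0, and the associated linear canonical transformation κ_φ : (y, −φ'_y(x,y)) ↦ (x, φ'_x(x,y)) maps the graph Λ₊ = {η = F₊y} onto {(x,0)} and Λ₋ = {η = F₋y} onto {(0,ξ)}. -/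
open scoped BigOperators

open Matrix in
private lemma im_quad7 {n : ℕ} (M : Matrix (Fin n) (Fin n) ℂ) (hM : M.IsSymm) (v : Fin n → ℂ) :
    (dotProduct (star v) (M.mulVec v)).im =
      dotProduct (fun i => (v i).re)
        (Matrix.mulVec (fun i j => (M i j).im : Matrix (Fin n) (Fin n) ℝ) (fun i => (v i).re)) +
      dotProduct (fun i => (v i).im)
        (Matrix.mulVec (fun i j => (M i j).im : Matrix (Fin n) (Fin n) ℝ) (fun i => (v i).im)) := by
  have hM' : ∀ i j, (M j i).re = (M i j).re := fun i j => by
    rw [← hM.apply i j]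
  have key : ∑ i, ∑ j, ((M i j).re * ((v i).re * (v j).im)
      - (M i j).re * ((v i).im * (v j).re)) = 0 := by
    have h2 : ∑ i, ∑ j, (M i j).re * ((v i).re * (v j).im)
        = ∑ i, ∑ j, (M i j).re * ((v i).im * (v j).re) := by
      rw [Finset.sum_comm]
      refine Finset.sum_congr rfl fun i _ => Finset.sum_congr rfl fun j _ => ?_
      rw [hM' j i]; ring
    simp [Finset.sum_sub_distrib, h2]
  have lhs : (dotProduct (star v) (M.mulVec v)).im
      = ∑ i, ∑ j, (((M i j).re * ((v i).re * (v j).im) - (M i j).re * ((v i).im * (v j).re))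
          + ((M i j).im * ((v i).re * (v j).re) + (M i j).im * ((v i).im * (v j).im))) := by
    simp only [dotProduct, mulVec, dotProduct, Pi.star_apply, Finset.mul_sum, Complex.im_sum]
    refine Finset.sum_congr rfl fun i _ => Finset.sum_congr rfl fun j _ => ?_
    simp [Complex.mul_im, Complex.mul_re]; ring
  rw [lhs]
  simp only [Finset.sum_add_distrib, key, zero_add]
  congr 1 <;>
  · simp only [dotProduct, mulVec, dotProduct, Finset.mul_sum]
    exact Finset.sum_congr rfl fun i _ => Finset.sum_congr rfl fun j _ => by ring

open Matrix in
private lemma isUnit_det_of_im_posDef7 {n : ℕ} (M : Matrix (Fin n) (Fin n) ℂ) (hM : M.IsSymm)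
    (hpos : Matrix.PosDef (fun i j => (M i j).im : Matrix (Fin n) (Fin n) ℝ)) :
    IsUnit M.det := by
  rw [isUnit_iff_ne_zero]
  intro hdet
  obtain ⟨v, hv, hMv⟩ := (Matrix.exists_mulVec_eq_zero_iff).2 hdet
  have h0 : (dotProduct (star v) (M.mulVec v)).im = 0 := by rw [hMv]; simp
  rw [im_quad7 M hM v] at h0
  set a : Fin n → ℝ := fun i => (v i).re
  set b : Fin n → ℝ := fun i => (v i).im
  have hab : a ≠ 0 ∨ b ≠ 0 := by
    by_contra h
    push_neg at h
    exact hv (funext fun i => Complex.ext (congrFun h.1 i) (congrFun h.2 i))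
  have hsemi := hpos.posSemidef
  rcases hab with h | h
  · have h1 := hpos.dotProduct_mulVec_pos h
    have h2 := hsemi.dotProduct_mulVec_nonneg b
    simp only [star_trivial] at h1 h2
    linarith
  · have h1 := hpos.dotProduct_mulVec_pos h
    have h2 := hsemi.dotProduct_mulVec_nonneg a
    simp only [star_trivial] at h1 h2
    linarith

/-- `φ'_x(x,y)` for `φ(x,y) = (1/2)Ax·x + Bx·y + (1/2)Cy·y`. -/
noncomputable def gradxPhi {n : ℕ} (A B C : Matrix (Fin n) (Fin n) ℂ)
    (x y : Fin n → ℂ) : Fin n → ℂ := A.mulVec x + B.transpose.mulVec y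

/-- `φ'_y(x,y)` for `φ(x,y) = (1/2)Ax·x + Bx·y + (1/2)Cy·y`. -/
noncomputable def gradyPhi {n : ℕ} (A B C : Matrix (Fin n) (Fin n) ℂ)
    (x y : Fin n → ℂ) : Fin n → ℂ := B.mulVec x + C.mulVec y

/-- Let `F₊, F₋` be complex symmetric with `Im F₊ > 0`, `Im F₋ < 0`. Then `F₊ − F₋` is
invertible and, for any invertible `B`, the quadratic form
`φ(x,y) = (1/2)Bᵗ(F₊−F₋)⁻¹Bx·x + Bx·y − (1/2)F₋y·y` satisfies `det φ''_{xy} ≠ 0`,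
`Im φ''_{yy} > 0`, and the associated canonical transformation
`κ_φ : (y, −φ'_y(x,y)) ↦ (x, φ'_x(x,y))` maps `Λ₊ = {η = F₊y}` onto `{(x,0)}` and
`Λ₋ = {η = F₋y}` onto `{(0,ξ)}`. -/
theorem stmt7 {n : ℕ} (Fp Fm B : Matrix (Fin n) (Fin n) ℂ)
    (hFp : Fp.IsSymm) (hFm : Fm.IsSymm)
    (hFpIm : Matrix.PosDef fun i j => (Fp i j).im)
    (hFmIm : Matrix.PosDef fun i j => (-(Fm i j)).im)
    (hB : IsUnit B.det) :
    IsUnit (Fp - Fm).det ∧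
    -- det φ''_{xy} ≠ 0
    B.det ≠ 0 ∧
    -- Im φ''_{yy} > 0 (here φ''_{yy} = −F₋)
    Matrix.PosDef (fun i j => ((-Fm) i j).im) ∧
    -- κ_φ maps Λ₊ onto the horizontal plane {(x,0)}
    {p : (Fin n → ℂ) × (Fin n → ℂ) | ∃ x y : Fin n → ℂ,
        -(gradyPhi (B.transpose * (Fp - Fm)⁻¹ * B) B (-Fm) x y) = Fp.mulVec y ∧
        p = (x, gradxPhi (B.transpose * (Fp - Fm)⁻¹ * B) B (-Fm) x y)} =
      {p : (Fin n → ℂ) × (Fin n → ℂ) | p.2 = 0} ∧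
    -- κ_φ maps Λ₋ onto the vertical plane {(0,ξ)}
    {p : (Fin n → ℂ) × (Fin n → ℂ) | ∃ x y : Fin n → ℂ,
        -(gradyPhi (B.transpose * (Fp - Fm)⁻¹ * B) B (-Fm) x y) = Fm.mulVec y ∧
        p = (x, gradxPhi (B.transpose * (Fp - Fm)⁻¹ * B) B (-Fm) x y)} =
      {p : (Fin n → ℂ) × (Fin n → ℂ) | p.1 = 0} := by
  have hsym : (Fp - Fm).IsSymm := hFp.sub hFm
  have him : Matrix.PosDef (fun i j => ((Fp - Fm) i j).im : Matrix (Fin n) (Fin n) ℝ) := by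
    have h := hFpIm.add hFmIm
    have he : ((fun i j => (Fp i j).im) + fun i j => (-(Fm i j)).im)
        = (fun i j => ((Fp - Fm) i j).im : Matrix (Fin n) (Fin n) ℝ) := by
      ext i j
      simp [Matrix.sub_apply, Matrix.add_apply, Complex.sub_im, sub_eq_add_neg]
    exact he ▸ h
  have hMdet : IsUnit (Fp - Fm).det := isUnit_det_of_im_posDef7 _ hsym him
  set M := Fp - Fm with hMdef
  have hMM : M * M⁻¹ = 1 := Matrix.mul_nonsing_inv _ hMdet
  have hMM' : M⁻¹ * M = 1 := Matrix.nonsing_inv_mul _ hMdet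
  refine ⟨hMdet, isUnit_iff_ne_zero.mp hB, ?_, ?_, ?_⟩
  · have : (fun i j => ((-Fm) i j).im) = (fun i j => (-(Fm i j)).im :
        Matrix (Fin n) (Fin n) ℝ) := by
      ext i j; simp
    rwa [this]
  · ext ⟨px, pξ⟩
    simp only [Set.mem_setOf_eq]
    constructor
    · rintro ⟨x, y, hcond, hp⟩
      have hBx : B.mulVec x = -(M.mulVec y) := by
        have h1 := hcond
        simp only [gradyPhi, neg_add_rev, Matrix.neg_mulVec] at h1
        have h2 : B.mulVec x = Fm.mulVec y - Fp.mulVec y := by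
          have := congrArg (fun w => w + B.mulVec x - Fp.mulVec y) h1
          simp at this ⊢
          linear_combination (norm := module) -this
        rw [h2, hMdef, Matrix.sub_mulVec]
        module
      have hgx : gradxPhi (B.transpose * M⁻¹ * B) B (-Fm) x y = 0 := by
        simp only [gradxPhi, Matrix.mul_assoc, ← Matrix.mulVec_mulVec]
        rw [hBx]
        simp only [Matrix.mulVec_neg, Matrix.mulVec_mulVec, hMM', Matrix.one_mulVec]
        module
      rw [Prod.ext_iff] at hp
      exact hp.2.trans hgx
    · intro h
      refine ⟨px, -(M⁻¹.mulVec (B.mulVec px)), ?_, ?_⟩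
      · simp only [gradyPhi, Matrix.neg_mulVec, Matrix.mulVec_neg, Matrix.mulVec_mulVec,
          Matrix.neg_mul, Matrix.mul_assoc]
        have h4 : (Fp * (M⁻¹ * B)).mulVec px - (Fm * (M⁻¹ * B)).mulVec px
            = B.mulVec px := by
          rw [← Matrix.sub_mulVec, ← Matrix.sub_mul, ← Matrix.mul_assoc, ← hMdef, hMM,
            Matrix.one_mul]
        linear_combination (norm := module) h4
      · have hgx : gradxPhi (B.transpose * M⁻¹ * B) B (-Fm) px
            (-(M⁻¹.mulVec (B.mulVec px))) = 0 := by
          simp only [gradxPhi, Matrix.mulVec_neg, Matrix.mulVec_mulVec, Matrix.mul_assoc]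
          module
        rw [hgx, show pξ = 0 from h]
  · ext ⟨px, pξ⟩
    simp only [Set.mem_setOf_eq]
    constructor
    · rintro ⟨x, y, hcond, hp⟩
      have hBx : B.mulVec x = 0 := by
        simp only [gradyPhi, Matrix.neg_mulVec] at hcond
        linear_combination (norm := module) -hcond
      have hx : x = 0 := by
        have : B⁻¹.mulVec (B.mulVec x) = x := by
          rw [Matrix.mulVec_mulVec, Matrix.nonsing_inv_mul B hB, Matrix.one_mulVec]
        rw [← this, hBx, Matrix.mulVec_zero]
      rw [Prod.ext_iff] at hp
      exact hp.1.trans hx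
    · intro h
      have hBt : IsUnit B.transpose.det := by rwa [Matrix.det_transpose]
      refine ⟨0, B.transpose⁻¹.mulVec pξ, ?_, ?_⟩
      · simp [gradyPhi, Matrix.neg_mulVec, Matrix.mulVec_zero]
      · have hgx : gradxPhi (B.transpose * M⁻¹ * B) B (-Fm) 0 (B.transpose⁻¹.mulVec pξ)
            = pξ := by
          simp only [gradxPhi, Matrix.mulVec_zero, Matrix.mulVec_mulVec, zero_add,
            Matrix.mul_nonsing_inv _ hBt, Matrix.one_mulVec]
        rw [hgx, show px = 0 from h]
end

section
/- Let φ(x,y) be a holomorphic quadratic form on ℂ^n × ℂ^n with det φ''_{xy} ≠ 0 and Im φ''_{yy} > 0, and set Φ(x) = sup_{y∈ℝ^n}(−Im φ(x,y)). Then the complex canonical transformation κ_φ : (y, −φ'_y(x,y)) ↦ (x, φ'_x(x,y)) maps ℝ^(2n) bijectively onto Λ_Φ = {(x, (2/i)∂_x Φ(x)) : x ∈ ℂ^n}, and consequently Φ is strictly plurisubharmonic (its Levi form ∂_{x̄}∂_x Φ is positive definite). -/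
open scoped BigOperators ComplexOrder

noncomputable def phiQ {n : ℕ} (A B C : Matrix (Fin n) (Fin n) ℂ)
    (x y : Fin n → ℂ) : ℂ :=
  (1/2) * dotC (A.mulVec x) x + dotC (B.mulVec y) x + (1/2) * dotC (C.mulVec y) y

noncomputable def cR {n : ℕ} (y : Fin n → ℝ) : Fin n → ℂ := fun j => (y j : ℂ)

/-- The linear canonical transformation `κ_φ : (y, −φ'_y(x,y)) ↦ (x, φ'_x(x,y))`
associated with `φ(x,y) = (1/2)Ax·x + By·x + (1/2)Cy·y` (so `φ'_x = Ax + By`,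
`φ'_y = Bᵗx + Cy`, solving `x = −(Bᵗ)⁻¹(η + Cy)` for a point `(y,η)`). -/
noncomputable def kappaPhi {n : ℕ} (A B C : Matrix (Fin n) (Fin n) ℂ)
    (p : (Fin n → ℂ) × (Fin n → ℂ)) : (Fin n → ℂ) × (Fin n → ℂ) :=
  (-(B.transpose⁻¹.mulVec (p.2 + C.mulVec p.1)),
    A.mulVec (-(B.transpose⁻¹.mulVec (p.2 + C.mulVec p.1))) + B.mulVec p.1)

/-- The real points `ℝ^(2n)` of `ℂ^(2n)`. -/
def realPts (n : ℕ) : Set ((Fin n → ℂ) × (Fin n → ℂ)) :=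
  {p | (∀ j, (p.1 j).im = 0) ∧ (∀ j, (p.2 j).im = 0)}

namespace Stmt9Aux

open Matrix

variable {n : ℕ}

def vRe (z : Fin n → ℂ) : Fin n → ℝ := fun j => (z j).re
def vIm (z : Fin n → ℂ) : Fin n → ℝ := fun j => (z j).im

lemma dotC_eq (x y : Fin n → ℂ) : dotC x y = x ⬝ᵥ y := rfl

lemma cR_apply (y : Fin n → ℝ) (j : Fin n) : cR y j = (y j : ℂ) := rfl

lemma star_cR (y : Fin n → ℝ) : star (cR y) = cR y := by
  funext j; simp [cR]

lemma vRe_cR (y : Fin n → ℝ) : vRe (cR y) = y := by funext j; simp [vRe, cR]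
lemma vIm_cR (y : Fin n → ℝ) : vIm (cR y) = 0 := by funext j; simp [vIm, cR]

lemma cR_eq_self (z : Fin n → ℂ) (h : ∀ j, (z j).im = 0) : cR (vRe z) = z := by
  funext j
  exact Complex.ext (by simp [cR, vRe]) (by simp [cR, (h j)])

lemma dot_re (z w : Fin n → ℂ) :
    (z ⬝ᵥ w).re = vRe z ⬝ᵥ vRe w - vIm z ⬝ᵥ vIm w := by
  simp [dotProduct, Complex.mul_re, vRe, vIm, Finset.sum_sub_distrib]

lemma dot_im (z w : Fin n → ℂ) :
    (z ⬝ᵥ w).im = vRe z ⬝ᵥ vIm w + vIm z ⬝ᵥ vRe w := by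
  simp [dotProduct, Complex.mul_im, vRe, vIm, Finset.sum_add_distrib]

/-- For a complex matrix, imaginary part of `M *ᵥ cR y`. -/
lemma vIm_mulVec_cR (M : Matrix (Fin n) (Fin n) ℂ) (y : Fin n → ℝ) :
    vIm (M.mulVec (cR y)) = Matrix.mulVec (fun i j => (M i j).im) y := by
  funext j
  simp [vIm, Matrix.mulVec, dotProduct, cR, Complex.im_sum, Complex.mul_im]

lemma vRe_mulVec_real (M : Matrix (Fin n) (Fin n) ℝ) (z : Fin n → ℂ) :
    vRe ((M.map (Complex.ofReal)).mulVec z) = M.mulVec (vRe z) := by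
  funext j
  simp [vRe, Matrix.mulVec, dotProduct, Matrix.map, Complex.re_sum, Complex.mul_re]

lemma vIm_mulVec_real (M : Matrix (Fin n) (Fin n) ℝ) (z : Fin n → ℂ) :
    vIm ((M.map (Complex.ofReal)).mulVec z) = M.mulVec (vIm z) := by
  funext j
  simp [vIm, Matrix.mulVec, dotProduct, Matrix.map, Complex.im_sum, Complex.mul_im]

lemma mapReal_mulVec_cR (M : Matrix (Fin n) (Fin n) ℝ) (y : Fin n → ℝ) :
    (M.map (Complex.ofReal)).mulVec (cR y) = cR (M.mulVec y) := by
  funext j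
  simp [Matrix.mulVec, dotProduct, Matrix.map, cR]

lemma mapConj_mulVec_star (M : Matrix (Fin n) (Fin n) ℂ) (z : Fin n → ℂ) :
    (M.map (starRingEnd ℂ)).mulVec (star z) = star (M.mulVec z) := by
  funext j
  simp [Matrix.mulVec, dotProduct, Matrix.map, map_sum]

lemma mapConj_dot_star (M : Matrix (Fin n) (Fin n) ℂ) (z : Fin n → ℂ) :
    ((M.map (starRingEnd ℂ)).mulVec (star z)) ⬝ᵥ (star z) = star ((M.mulVec z) ⬝ᵥ z) := by
  rw [mapConj_mulVec_star]
  simp [dotProduct, map_sum]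


section Main
variable (A B C : Matrix (Fin n) (Fin n) ℂ)

/-- imaginary part of `C`. -/
noncomputable def Mim : Matrix (Fin n) (Fin n) ℝ := fun i j => (C i j).im

/-- `G = (Im C)⁻¹`. -/
noncomputable def Gr : Matrix (Fin n) (Fin n) ℝ := (Mim C)⁻¹

/-- complexification of `G`. -/
noncomputable def GC : Matrix (Fin n) (Fin n) ℂ := (Gr C).map Complex.ofReal

noncomputable def Pm : Matrix (Fin n) (Fin n) ℂ :=
  (Complex.I/2) • A + (-(1/4) : ℂ) • (B * GC C * Bᵀ)

noncomputable def Hm : Matrix (Fin n) (Fin n) ℂ :=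
  (1/4 : ℂ) • (B.map (starRingEnd ℂ) * GC C * Bᵀ)

variable {A B C}

lemma Mim_symm (hC : C.IsSymm) : (Mim C)ᵀ = Mim C := by
  funext i j
  simp only [Mim, Matrix.transpose_apply]
  rw [hC.apply i j]

lemma Gr_symm (hC : C.IsSymm) : (Gr C)ᵀ = Gr C := by
  rw [Gr, Matrix.transpose_nonsing_inv, Mim_symm hC]

lemma GC_symm (hC : C.IsSymm) : (GC C)ᵀ = GC C := by
  rw [GC, Matrix.transpose_map.symm, Gr_symm hC]

lemma hMimdet (hImC : (Mim C).PosDef) : IsUnit (Mim C).det := hImC.det_pos.ne'.isUnit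

lemma Mim_Gr (hImC : (Mim C).PosDef) : Mim C * Gr C = 1 :=
  Matrix.mul_nonsing_inv _ (hMimdet hImC)

lemma Gr_Mim (hImC : (Mim C).PosDef) : Gr C * Mim C = 1 :=
  Matrix.nonsing_inv_mul _ (hMimdet hImC)

lemma Pm_symm (hA : A.IsSymm) (hC : C.IsSymm) : (Pm A B C).IsSymm := by
  unfold Matrix.IsSymm
  rw [Pm, Matrix.transpose_add, Matrix.transpose_smul, Matrix.transpose_smul, hA,
    Matrix.transpose_mul, Matrix.transpose_mul, Matrix.transpose_transpose, GC_symm hC,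
    Matrix.mul_assoc]

lemma Hm_herm (hC : C.IsSymm) : (Hm B C).IsHermitian := by
  unfold Matrix.IsHermitian
  have hGC : (GC C)ᴴ = GC C := by
    rw [Matrix.conjTranspose, GC, Matrix.transpose_map.symm, Gr_symm hC]
    funext i j; simp [Matrix.map, GC]
  have h1 : (B.map (starRingEnd ℂ))ᴴ = Bᵀ := by
    funext i j; simp [Matrix.conjTranspose_apply, Matrix.map]
  have h2 : (Bᵀ)ᴴ = B.map (starRingEnd ℂ) := by
    funext i j; simp [Matrix.conjTranspose_apply, Matrix.map]
  rw [Hm, Matrix.conjTranspose_smul, Matrix.conjTranspose_mul, Matrix.conjTranspose_mul,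
    h1, h2, hGC, Matrix.mul_assoc]
  norm_num


lemma star_dot_GC_re (hC : C.IsSymm) (z : Fin n → ℂ) :
    (star z ⬝ᵥ (GC C).mulVec z).re
      = (Gr C).mulVec (vRe z) ⬝ᵥ vRe z + (Gr C).mulVec (vIm z) ⬝ᵥ vIm z := by
  rw [dot_re]
  have h1 : vRe (star z) = vRe z := by funext j; simp [vRe]
  have h2 : vIm (star z) = -(vIm z) := by funext j; simp [vIm]
  rw [h1, h2, GC, vRe_mulVec_real, vIm_mulVec_real]
  rw [dotProduct_comm (vRe z), dotProduct_comm (-(vIm z))]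
  simp [neg_dotProduct]

lemma symm_dot_swap {M : Matrix (Fin n) (Fin n) ℝ} (hM : Mᵀ = M) (a b : Fin n → ℝ) :
    a ⬝ᵥ M.mulVec b = M.mulVec a ⬝ᵥ b := by
  rw [Matrix.dotProduct_mulVec, ← Matrix.mulVec_transpose, hM]

lemma star_dot_GC_im (hC : C.IsSymm) (z : Fin n → ℂ) :
    (star z ⬝ᵥ (GC C).mulVec z).im = 0 := by
  rw [dot_im]
  have h1 : vRe (star z) = vRe z := by funext j; simp [vRe]
  have h2 : vIm (star z) = -(vIm z) := by funext j; simp [vIm]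
  rw [h1, h2, GC, vRe_mulVec_real, vIm_mulVec_real]
  rw [symm_dot_swap (Gr_symm hC), neg_dotProduct, dotProduct_comm]
  ring

lemma Bt_ne (hB : B.det ≠ 0) {x : Fin n → ℂ} (hx : x ≠ 0) : Bᵀ.mulVec x ≠ 0 := by
  intro h
  apply hx
  have hd : IsUnit (Bᵀ).det := by rw [Matrix.det_transpose]; exact hB.isUnit
  have := congrArg ((Bᵀ)⁻¹.mulVec) h
  rwa [Matrix.mulVec_mulVec, Matrix.nonsing_inv_mul _ hd, Matrix.one_mulVec,
    Matrix.mulVec_zero] at this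

lemma Hm_posdef (hC : C.IsSymm) (hImC : (Mim C).PosDef) (hB : B.det ≠ 0) :
    (Hm B C).PosDef := by
  have hGr : (Gr C).PosDef := hImC.inv
  refine Matrix.PosDef.of_dotProduct_mulVec_pos (Hm_herm hC) (fun x hx => ?_)
  have hkey : star x ⬝ᵥ (Hm B C).mulVec x
      = (1/4 : ℂ) * (star (Bᵀ.mulVec x) ⬝ᵥ (GC C).mulVec (Bᵀ.mulVec x)) := by
    rw [Hm, Matrix.smul_mulVec, dotProduct_smul]
    congr 1
    rw [Matrix.mul_assoc, ← Matrix.mulVec_mulVec, ← Matrix.mulVec_mulVec,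
      Matrix.dotProduct_mulVec (star x), ← Matrix.mulVec_transpose,
      ← Matrix.transpose_map, mapConj_mulVec_star]
  set t := Bᵀ.mulVec x with ht
  have htne : t ≠ 0 := Bt_ne hB hx
  have hre : 0 < (star t ⬝ᵥ (GC C).mulVec t).re := by
    rw [star_dot_GC_re hC]
    have hsemi : ∀ a : Fin n → ℝ, 0 ≤ (Gr C).mulVec a ⬝ᵥ a := by
      intro a
      have := hGr.posSemidef.dotProduct_mulVec_nonneg a
      simpa [dotProduct_comm] using this
    have hpos : ∀ a : Fin n → ℝ, a ≠ 0 → 0 < (Gr C).mulVec a ⬝ᵥ a := by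
      intro a ha
      have := hGr.dotProduct_mulVec_pos ha
      simpa [dotProduct_comm] using this
    rcases (by
      by_contra h
      push_neg at h
      apply htne
      funext j
      exact Complex.ext (by simpa [vRe] using congrFun h.1 j)
        (by simpa [vIm] using congrFun h.2 j) :
        vRe t ≠ 0 ∨ vIm t ≠ 0) with h | h
    · have := hpos _ h; have := hsemi (vIm t); linarith
    · have := hpos _ h; have := hsemi (vRe t); linarith
  rw [Complex.lt_def, hkey]
  constructor
  · simpa [Complex.mul_re, star_dot_GC_im hC] using by linarith [hre]
  · simp [Complex.mul_im, star_dot_GC_im hC]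


lemma Hm_transpose (hC : C.IsSymm) :
    (Hm B C)ᵀ = (1/4 : ℂ) • (B * GC C * (Bᵀ.map (starRingEnd ℂ))) := by
  rw [Hm, Matrix.transpose_smul, Matrix.transpose_mul, Matrix.transpose_mul,
    Matrix.transpose_transpose, GC_symm hC, Matrix.transpose_map, Matrix.mul_assoc]

lemma core_identity (hC : C.IsSymm) (x : Fin n → ℂ) :
    ((2:ℂ)/Complex.I) • ((Pm A B C).mulVec x + (Hm B C)ᵀ.mulVec (star x))
      = A.mulVec x + B.mulVec (cR (-((Gr C).mulVec (vIm (Bᵀ.mulVec x))))) := by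
  set t := Bᵀ.mulVec x with ht
  have h1 : (Pm A B C).mulVec x
      = (Complex.I/2) • A.mulVec x + (-(1/4):ℂ) • B.mulVec ((GC C).mulVec t) := by
    rw [Pm, Matrix.add_mulVec, Matrix.smul_mulVec, Matrix.smul_mulVec,
      Matrix.mul_assoc, ← Matrix.mulVec_mulVec, ← Matrix.mulVec_mulVec]
  have h2 : (Hm B C)ᵀ.mulVec (star x)
      = (1/4:ℂ) • B.mulVec ((GC C).mulVec (star t)) := by
    rw [Hm_transpose hC, Matrix.smul_mulVec, Matrix.mul_assoc,
      ← Matrix.mulVec_mulVec, ← Matrix.mulVec_mulVec, mapConj_mulVec_star]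
  have hvec : (Complex.I/2) • (t - star t) = cR (-(vIm t)) := by
    funext j
    simp only [Pi.smul_apply, Pi.sub_apply, cR, Pi.neg_apply, vIm, smul_eq_mul]
    rw [show star t j = (starRingEnd ℂ) (t j) from rfl, Complex.sub_conj]
    push_cast
    linear_combination ((t j).im : ℂ) * Complex.I_mul_I
  have hstep : B.mulVec ((GC C).mulVec ((Complex.I/2) • (t - star t)))
      = B.mulVec (cR (-((Gr C).mulVec (vIm t)))) := by
    rw [hvec, GC, mapReal_mulVec_cR]
    congr 1
    funext j
    simp [cR, Matrix.mulVec_neg]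
  rw [h1, h2, smul_add, smul_add, smul_smul, smul_smul, smul_smul]
  have c1 : (2:ℂ)/Complex.I * (Complex.I/2) = 1 := by
    rw [Complex.div_I]; linear_combination -Complex.I_mul_I
  have c2 : (2:ℂ)/Complex.I * (-(1/4)) = Complex.I/2 := by
    rw [Complex.div_I]; ring
  have c3 : (2:ℂ)/Complex.I * (1/4) = -(Complex.I/2) := by
    rw [Complex.div_I]; ring
  rw [c1, c2, c3, one_smul, ← hstep]
  simp only [Matrix.mulVec_smul, Matrix.mulVec_sub]
  module


lemma bdot (M : Matrix (Fin n) (Fin n) ℂ) (v x : Fin n → ℂ) :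
    (M.mulVec v) ⬝ᵥ x = (Mᵀ.mulVec x) ⬝ᵥ v := by
  rw [dotProduct_comm, Matrix.dotProduct_mulVec, ← Matrix.mulVec_transpose]

lemma phi_im (x : Fin n → ℂ) (y : Fin n → ℝ) :
    -(phiQ A B C x (cR y)).im
      = -(1/2) * ((A.mulVec x) ⬝ᵥ x).im - (vIm (Bᵀ.mulVec x)) ⬝ᵥ y
        - (1/2) * ((Mim C).mulVec y ⬝ᵥ y) := by
  have hmid : ((B.mulVec (cR y)) ⬝ᵥ x).im = (vIm (Bᵀ.mulVec x)) ⬝ᵥ y := by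
    rw [bdot, dot_im, vIm_cR, vRe_cR]
    simp
  have hthird : ((C.mulVec (cR y)) ⬝ᵥ (cR y)).im = (Mim C).mulVec y ⬝ᵥ y := by
    rw [dot_im, vIm_cR, vRe_cR, vIm_mulVec_cR]
    simp only [dotProduct_zero, zero_add]
    rfl
  have c3 : ((1:ℂ)/2).re = 1/2 := by norm_num
  have c4 : ((1:ℂ)/2).im = 0 := by norm_num
  rw [phiQ]
  simp only [Complex.add_im, Complex.mul_im, dotC_eq, hmid, hthird, c3, c4]
  ring

lemma val_re (hC : C.IsSymm) (x : Fin n → ℂ) :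
    ((1/2) * dotC ((Pm A B C).mulVec x) x + dotC ((Hm B C).mulVec x) (star x) +
          (1/2) * dotC (((Pm A B C).map (starRingEnd ℂ)).mulVec (star x)) (star x)).re
      = -(1/2) * ((A.mulVec x) ⬝ᵥ x).im
        + (1/2) * ((Gr C).mulVec (vIm (Bᵀ.mulVec x)) ⬝ᵥ (vIm (Bᵀ.mulVec x))) := by
  set t := Bᵀ.mulVec x with ht
  set a := vRe t with ha
  set u := vIm t with hu
  have hthird := mapConj_dot_star (Pm A B C) x
  have hz : ((Pm A B C).mulVec x ⬝ᵥ x)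
      = (Complex.I/2) * ((A.mulVec x) ⬝ᵥ x) + (-(1/4):ℂ) * (t ⬝ᵥ (GC C).mulVec t) := by
    rw [Pm, Matrix.add_mulVec, Matrix.smul_mulVec, Matrix.smul_mulVec,
      add_dotProduct, smul_dotProduct, smul_dotProduct,
      Matrix.mul_assoc, ← Matrix.mulVec_mulVec, bdot B]
    rw [← Matrix.mulVec_mulVec]
    simp only [smul_eq_mul, ← ht]
  have hw : ((Hm B C).mulVec x ⬝ᵥ (star x))
      = (1/4:ℂ) * ((star t) ⬝ᵥ (GC C).mulVec t) := by
    rw [Hm, Matrix.smul_mulVec, smul_dotProduct,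
      Matrix.mul_assoc, ← Matrix.mulVec_mulVec, bdot (B.map (starRingEnd ℂ)),
      ← Matrix.transpose_map, mapConj_mulVec_star]
    rw [← Matrix.mulVec_mulVec]
    simp only [smul_eq_mul, ← ht]
  have hGtt_re : (t ⬝ᵥ (GC C).mulVec t).re
      = (Gr C).mulVec a ⬝ᵥ a - (Gr C).mulVec u ⬝ᵥ u := by
    rw [dot_re, GC, vRe_mulVec_real, vIm_mulVec_real,
      dotProduct_comm a, dotProduct_comm u]
  have hGtst_re : ((star t) ⬝ᵥ (GC C).mulVec t).re
      = (Gr C).mulVec a ⬝ᵥ a + (Gr C).mulVec u ⬝ᵥ u :=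
    star_dot_GC_re hC t
  have c1 : (Complex.I/2).re = 0 := by simp
  have c2 : (Complex.I/2).im = 1/2 := by simp
  have c3 : ((1:ℂ)/2).re = 1/2 := by norm_num
  have c4 : ((1:ℂ)/2).im = 0 := by norm_num
  have c7 : ((1/4:ℂ)).re = 1/4 := by norm_num
  have c8 : ((1/4:ℂ)).im = 0 := by norm_num
  have c5 : ((-(1/4):ℂ)).re = -(1/4) := by norm_num
  have c6 : ((-(1/4):ℂ)).im = 0 := by norm_num
  simp only [dotC_eq]
  rw [Complex.add_re, Complex.add_re, hthird, hz, hw]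
  simp only [Complex.mul_re, Complex.mul_im, Complex.add_re, Complex.add_im,
    c1, c2, c3, c4, c5, c6, c7, c8, Complex.star_def, Complex.conj_re, Complex.conj_im,
    map_add, _root_.map_mul, hGtt_re, hGtst_re]
  ring


lemma Mim_Gr_vec (hImC : (Mim C).PosDef) (u : Fin n → ℝ) :
    (Mim C).mulVec ((Gr C).mulVec u) = u := by
  rw [Matrix.mulVec_mulVec, Mim_Gr hImC, Matrix.one_mulVec]

lemma Gr_Mim_vec (hImC : (Mim C).PosDef) (u : Fin n → ℝ) :
    (Gr C).mulVec ((Mim C).mulVec u) = u := by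
  rw [Matrix.mulVec_mulVec, Gr_Mim hImC, Matrix.one_mulVec]

lemma upper (hC : C.IsSymm) (hImC : (Mim C).PosDef) (x : Fin n → ℂ) (y : Fin n → ℝ) :
    -(phiQ A B C x (cR y)).im
      ≤ -(1/2) * ((A.mulVec x) ⬝ᵥ x).im
        + (1/2) * ((Gr C).mulVec (vIm (Bᵀ.mulVec x)) ⬝ᵥ (vIm (Bᵀ.mulVec x))) := by
  set u := vIm (Bᵀ.mulVec x) with hu
  rw [phi_im]
  set g := (Gr C).mulVec u with hg
  have h0 : 0 ≤ (y + g) ⬝ᵥ (Mim C).mulVec (y + g) := by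
    have := hImC.posSemidef.dotProduct_mulVec_nonneg (y + g)
    simpa using this
  have hMg : (Mim C).mulVec g = u := Mim_Gr_vec hImC u
  have hexp : (y + g) ⬝ᵥ (Mim C).mulVec (y + g)
      = (Mim C).mulVec y ⬝ᵥ y + 2 * (u ⬝ᵥ y) + g ⬝ᵥ u := by
    rw [Matrix.mulVec_add, dotProduct_add, add_dotProduct,
      add_dotProduct, hMg]
    have e1 : y ⬝ᵥ (Mim C).mulVec y = (Mim C).mulVec y ⬝ᵥ y := dotProduct_comm _ _
    have e2 : g ⬝ᵥ (Mim C).mulVec y = u ⬝ᵥ y := by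
      rw [symm_dot_swap (Mim_symm hC), hMg]
    have e3 : y ⬝ᵥ u = u ⬝ᵥ y := dotProduct_comm _ _
    rw [e1, e2, e3]
    ring
  rw [hexp] at h0
  have e4 : u ⬝ᵥ g = g ⬝ᵥ u := dotProduct_comm _ _
  have e5 : u ⬝ᵥ y = y ⬝ᵥ u := dotProduct_comm _ _
  rw [e5] at h0
  rw [show vIm (Bᵀ.mulVec x) ⬝ᵥ y = y ⬝ᵥ u from by rw [← hu]; exact dotProduct_comm _ _]
  linarith

lemma atmax (hC : C.IsSymm) (hImC : (Mim C).PosDef) (x : Fin n → ℂ) :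
    -(phiQ A B C x (cR (-((Gr C).mulVec (vIm (Bᵀ.mulVec x)))))).im
      = -(1/2) * ((A.mulVec x) ⬝ᵥ x).im
        + (1/2) * ((Gr C).mulVec (vIm (Bᵀ.mulVec x)) ⬝ᵥ (vIm (Bᵀ.mulVec x))) := by
  set u := vIm (Bᵀ.mulVec x) with hu
  rw [phi_im]
  set g := (Gr C).mulVec u with hg
  have hMg : (Mim C).mulVec g = u := Mim_Gr_vec hImC u
  have e1 : u ⬝ᵥ (-g) = -(g ⬝ᵥ u) := by
    rw [dotProduct_neg, dotProduct_comm]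
  have e2 : (Mim C).mulVec (-g) ⬝ᵥ (-g) = g ⬝ᵥ u := by
    rw [Matrix.mulVec_neg, neg_dotProduct, dotProduct_neg, neg_neg, hMg,
      dotProduct_comm]
  rw [e1, e2]
  ring

lemma greatest (hC : C.IsSymm) (hImC : (Mim C).PosDef) (x : Fin n → ℂ) :
    IsGreatest (Set.range fun y : Fin n → ℝ => -(phiQ A B C x (cR y)).im)
      (-(1/2) * ((A.mulVec x) ⬝ᵥ x).im
        + (1/2) * ((Gr C).mulVec (vIm (Bᵀ.mulVec x)) ⬝ᵥ (vIm (Bᵀ.mulVec x)))) := by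
  constructor
  · exact ⟨-((Gr C).mulVec (vIm (Bᵀ.mulVec x))), atmax hC hImC x⟩
  · rintro v ⟨y, rfl⟩
    exact upper hC hImC x y

lemma mulVec_cancel {M : Matrix (Fin n) (Fin n) ℂ} (hdet : M.det ≠ 0)
    {v w : Fin n → ℂ} (h : M.mulVec v = M.mulVec w) : v = w := by
  have := congrArg (M⁻¹.mulVec) h
  rwa [Matrix.mulVec_mulVec, Matrix.mulVec_mulVec, Matrix.nonsing_inv_mul _ hdet.isUnit,
    Matrix.one_mulVec, Matrix.one_mulVec] at this

lemma Bt_fst (hB : B.det ≠ 0) (w : Fin n → ℂ) :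
    Bᵀ.mulVec (-(Bᵀ⁻¹.mulVec w)) = -w := by
  rw [Matrix.mulVec_neg, Matrix.mulVec_mulVec,
    Matrix.mul_nonsing_inv _ (by rwa [Matrix.det_transpose] : (Bᵀ).det ≠ 0).isUnit,
    Matrix.one_mulVec]

lemma vIm_add (v w : Fin n → ℂ) : vIm (v + w) = vIm v + vIm w := by
  funext j; simp [vIm]

lemma vIm_neg (v : Fin n → ℂ) : vIm (-v) = -(vIm v) := by
  funext j; simp [vIm]

end Main
end Stmt9Aux

open Matrix Stmt9Aux in
/-- `κ_φ` maps `ℝ^(2n)` bijectively onto `Λ_Φ = {(x, (2/i)∂ₓΦ(x))}` where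
`Φ(x) = sup_{y∈ℝⁿ}(−Im φ(x,y))`; consequently `Φ` is a strictly plurisubharmonic
quadratic form (there are `P` symmetric and `H` Hermitian positive definite with
`Φ(x) = (1/2)Px·x + Hx·x̄ + (1/2)P̄x̄·x̄` and `∂ₓΦ(x) = Px + Hᵗx̄`). -/
theorem stmt9 {n : ℕ} (A B C : Matrix (Fin n) (Fin n) ℂ)
    (hA : A.IsSymm) (hC : C.IsSymm) (hB : B.det ≠ 0)
    (hImC : Matrix.PosDef fun i j => (C i j).im)
    (Φ : (Fin n → ℂ) → ℝ)
    (hΦ : ∀ x, IsGreatest (Set.range fun y : Fin n → ℝ => -(phiQ A B C x (cR y)).im) (Φ x)) :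
    ∃ P H : Matrix (Fin n) (Fin n) ℂ, P.IsSymm ∧ H.IsHermitian ∧ H.PosDef ∧
      (∀ x : Fin n → ℂ,
        Φ x = ((1/2) * dotC (P.mulVec x) x + dotC (H.mulVec x) (star x) +
          (1/2) * dotC ((P.map (starRingEnd ℂ)).mulVec (star x)) (star x)).re) ∧
      Set.BijOn (kappaPhi A B C) (realPts n)
        {p : (Fin n → ℂ) × (Fin n → ℂ) |
          p.2 = ((2 : ℂ)/Complex.I) • (P.mulVec p.1 + H.transpose.mulVec (star p.1))} := by
  classical
  have hImC' : (Mim C).PosDef := hImC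
  have hmapsto : ∀ p ∈ realPts n, kappaPhi A B C p ∈
      {p : (Fin n → ℂ) × (Fin n → ℂ) |
        p.2 = ((2 : ℂ)/Complex.I) • ((Pm A B C).mulVec p.1
          + (Hm B C)ᵀ.mulVec (star p.1))} := by
    intro p hp
    obtain ⟨hp1, hp2⟩ := hp
    set x := -(Bᵀ⁻¹.mulVec (p.2 + C.mulVec p.1)) with hx
    have hBtx : Bᵀ.mulVec x = -(p.2 + C.mulVec p.1) := Bt_fst hB _
    have hp1' : cR (vRe p.1) = p.1 := cR_eq_self p.1 hp1
    have him : vIm (Bᵀ.mulVec x) = -((Mim C).mulVec (vRe p.1)) := by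
      rw [hBtx, vIm_neg, vIm_add]
      have h2 : vIm p.2 = 0 := by funext j; exact hp2 j
      rw [h2, ← hp1', vIm_mulVec_cR]
      simp only [zero_add]
      rfl
    have hrec : cR (-((Gr C).mulVec (vIm (Bᵀ.mulVec x)))) = p.1 := by
      rw [him]
      rw [show -((Gr C).mulVec (-((Mim C).mulVec (vRe p.1))))
          = (Gr C).mulVec ((Mim C).mulVec (vRe p.1)) from by
        rw [Matrix.mulVec_neg, neg_neg]]
      rw [Gr_Mim_vec hImC', hp1']
    show A.mulVec x + B.mulVec p.1
        = ((2 : ℂ)/Complex.I) • ((Pm A B C).mulVec x + (Hm B C)ᵀ.mulVec (star x))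
    rw [core_identity hC x, hrec]
  have hcore2 : ∀ x : Fin n → ℂ,
      A.mulVec x + B.mulVec (cR (-((Gr C).mulVec (vIm (Bᵀ.mulVec x)))))
        = ((2 : ℂ)/Complex.I) • ((Pm A B C).mulVec x + (Hm B C)ᵀ.mulVec (star x)) :=
    fun x => (core_identity hC x).symm
  refine ⟨Pm A B C, Hm B C, Pm_symm hA hC, Hm_herm hC, Hm_posdef hC hImC' hB, ?_, ?_, ?_, ?_⟩
  · intro x
    rw [val_re hC x]
    exact (hΦ x).unique (greatest hC hImC' x)
  · exact hmapsto
  · -- InjOn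
    intro p hp q hq h
    have h1 := congrArg Prod.fst h
    have h2 := congrArg Prod.snd h
    simp only [kappaPhi] at h1 h2
    rw [h1] at h2
    have hfst : B.mulVec p.1 = B.mulVec q.1 := add_left_cancel h2
    have hp1q1 : p.1 = q.1 := mulVec_cancel hB hfst
    have h3 := congrArg (Bᵀ.mulVec) h1
    rw [Bt_fst hB, Bt_fst hB, neg_inj] at h3
    have hp2q2 : p.2 = q.2 := by
      have := h3
      rw [hp1q1] at this
      exact add_right_cancel this
    exact Prod.ext hp1q1 hp2q2
  · -- SurjOn
    intro p hp
    have hpmem : p.2 = ((2 : ℂ)/Complex.I) • ((Pm A B C).mulVec p.1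
        + (Hm B C)ᵀ.mulVec (star p.1)) := hp
    set x := p.1 with hxdef
    set u := vIm (Bᵀ.mulVec x) with hudef
    set yv := -((Gr C).mulVec u) with hyv
    set η := -(Bᵀ.mulVec x + C.mulVec (cR yv)) with heta
    refine ⟨(cR yv, η), ⟨fun j => by simp [cR], fun j => ?_⟩, ?_⟩
    · -- η real
      have him : vIm η = 0 := by
        rw [heta, vIm_neg, vIm_add, ← hudef, vIm_mulVec_cR]
        have : Matrix.mulVec (fun i j => (C i j).im) yv = -u := by
          rw [show Matrix.mulVec (fun i j => (C i j).im) yv = (Mim C).mulVec yv from rfl,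
            hyv, Matrix.mulVec_neg, Mim_Gr_vec hImC', ]
        rw [this]
        simp
      exact congrFun him j
    · -- maps to p
      have hq2 : η + C.mulVec (cR yv) = -(Bᵀ.mulVec x) := by
        rw [heta]; ring_nf
      have hfst : -(Bᵀ⁻¹.mulVec (η + C.mulVec (cR yv))) = x := by
        rw [hq2, Matrix.mulVec_neg, neg_neg, Matrix.mulVec_mulVec,
          Matrix.nonsing_inv_mul _ (by rwa [Matrix.det_transpose] : (Bᵀ).det ≠ 0).isUnit,
          Matrix.one_mulVec]
      have hsnd : A.mulVec x + B.mulVec (cR yv) = p.2 := by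
        rw [hpmem, hyv, ← hcore2 x]
      show kappaPhi A B C (cR yv, η) = p
      rw [kappaPhi]
      exact Prod.ext (by simpa using hfst) (by simp only; rw [hfst]; exact hsnd)
end

section
/- Let q be a plurisubharmonic real quadratic form on ℂ^n ≅ ℝ^(2n), with decomposition q = h + ℓ where h(x) = (q(x) − q(ix))/2 is pluriharmonic and ℓ(x) = (q(x) + q(ix))/2 is the Levi part (ℓ ≥ 0). Then m₊(q) ≥ m₋(q), where (m₊, m₋) is the signature of q as a real quadratic form. -/
/-! Multiplication by `i` maps a subspace `L` on which `q` is negative definite isomorphically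
onto `i • L`, and there `q (i • x) ≥ -q x > 0` because the Levi part of `q` is nonnegative. -/

theorem QuadraticMap.pos_of_mem_map_of_neg {R M N : Type*} [CommSemiring R] [AddCommMonoid M]
    [Module R M] [AddCommGroup N] [PartialOrder N] [IsOrderedAddMonoid N] [Module R N]
    (q : QuadraticMap R M N) (f : M →ₗ[R] M) (hf : ∀ x, 0 ≤ q x + q (f x))
    {L : Submodule R M} (hL : ∀ x ∈ L, x ≠ 0 → q x < 0) :
    ∀ x ∈ L.map f, x ≠ 0 → 0 < q x := by
  rintro _ ⟨y, hy, rfl⟩ hfy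
  have hy0 : y ≠ 0 := by
    rintro rfl
    exact hfy (map_zero f)
  calc 0 < -q y := neg_pos.mpr (hL y hy hy0)
    _ ≤ q (f y) := neg_le_iff_add_nonneg'.mpr (hf y)

/-- For a plurisubharmonic real quadratic form `q` on `ℂⁿ ≅ ℝ^(2n)` (i.e. the Levi part
`ℓ(x) = (q(x) + q(ix))/2` is ≥ 0), one has `m₊(q) ≥ m₋(q)`: for every real subspace on
which `q` is negative definite there is a real subspace of at least the same dimension
on which `q` is positive definite. -/
theorem stmt14 {n : ℕ} (q : QuadraticMap ℝ (Fin n → ℂ) ℝ)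
    (hpsh : ∀ x : Fin n → ℂ, 0 ≤ (q x + q (Complex.I • x)) / 2) :
    ∀ L : Submodule ℝ (Fin n → ℂ), (∀ x ∈ L, x ≠ 0 → q x < 0) →
      ∃ W : Submodule ℝ (Fin n → ℂ),
        Module.finrank ℝ L ≤ Module.finrank ℝ W ∧ ∀ x ∈ W, x ≠ 0 → 0 < q x := by
  intro L hL
  let mulI : (Fin n → ℂ) ≃ₗ[ℝ] (Fin n → ℂ) :=
    (LinearEquiv.smulOfNeZero ℂ (Fin n → ℂ) Complex.I Complex.I_ne_zero).restrictScalars ℝ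
  have hlevi : ∀ x, 0 ≤ q x + q (mulI x) := fun x => by
    change 0 ≤ q x + q (Complex.I • x)
    linarith [hpsh x]
  exact ⟨L.map (mulI : (Fin n → ℂ) →ₗ[ℝ] (Fin n → ℂ)), (mulI.finrank_map_eq L).ge,
    q.pos_of_mem_map_of_neg _ hlevi hL⟩
end

section
/- Let q be a plurisubharmonic quadratic form on ℂ^n which is nondegenerate of signature (n, n) (as a real quadratic form on ℝ^(2n)). Then every plurisubharmonic quadratic form q̃ with q̃ ≤ q is also nondegenerate of signature (n, n). -/
/-!
Since `q̃ ≤ q`, the form `q̃` is negative definite on the `n`-dimensional subspace `L` where `q`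
is. Plurisubharmonicity of `q̃` says `q̃ x + q̃ (i x) ≥ 0`, so `q̃` is positive definite on `i L`.
These two subspaces meet only in `0` and have complementary dimensions `n + n = 2n`; a form that
is negative definite on one summand of a direct sum decomposition and positive definite on the
other is nondegenerate.
-/

namespace QuadraticMap

variable {𝕜 V : Type*} [Field 𝕜] [LinearOrder 𝕜] [AddCommGroup V] [Module 𝕜 V]

theorem disjoint_of_neg_of_pos {Q : QuadraticMap 𝕜 V 𝕜} {L P : Submodule 𝕜 V}
    (hL : ∀ x ∈ L, x ≠ 0 → Q x < 0) (hP : ∀ x ∈ P, x ≠ 0 → 0 < Q x) : Disjoint L P := by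
  rw [Submodule.disjoint_def]
  intro x hxL hxP
  by_contra hx
  exact (hL x hxL hx).not_gt (hP x hxP hx)

variable [IsStrictOrderedRing 𝕜]

theorem pos_on_map_of_neg {Q : QuadraticMap 𝕜 V 𝕜} (e : V ≃ₗ[𝕜] V) (he : ∀ x, 0 ≤ Q x + Q (e x))
    {L : Submodule 𝕜 V} (hL : ∀ x ∈ L, x ≠ 0 → Q x < 0) :
    ∀ x ∈ L.map (e : V →ₗ[𝕜] V), x ≠ 0 → 0 < Q x := by
  rintro _ ⟨x, hx, rfl⟩ hex
  have hx0 : x ≠ 0 := by rintro rfl; exact hex (map_zero e)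
  rw [LinearEquiv.coe_coe]
  linarith [he x, hL x hx hx0]

theorem polar_nondegenerate_of_isCompl {Q : QuadraticMap 𝕜 V 𝕜} {L P : Submodule 𝕜 V}
    (hLP : IsCompl L P) (hL : ∀ x ∈ L, x ≠ 0 → Q x < 0) (hP : ∀ x ∈ P, x ≠ 0 → 0 < Q x) :
    ∀ x, (∀ y, polar Q x y = 0) → x = 0 := by
  intro x hx
  obtain ⟨a, ha, b, hb, rfl⟩ : ∃ a ∈ L, ∃ b ∈ P, a + b = x :=
    Submodule.mem_sup.mp (hLP.sup_eq_top ▸ Submodule.mem_top)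
  have hab : Q a = Q b := by
    have hxa := hx a
    have hxb := hx b
    rw [polar_add_left, polar_self, polar_comm Q b a] at hxa
    rw [polar_add_left, polar_self] at hxb
    simp only [two_smul] at hxa hxb
    linarith
  have hQa : Q a ≤ 0 := by
    rcases eq_or_ne a 0 with rfl | ha0
    · exact (map_zero Q).le
    · exact (hL a ha ha0).le
  have hQb : 0 ≤ Q b := by
    rcases eq_or_ne b 0 with rfl | hb0
    · exact (map_zero Q).ge
    · exact (hP b hb hb0).le
  have ha0 : a = 0 := by_contra fun ha0 => by linarith [hL a ha ha0]
  have hb0 : b = 0 := by_contra fun hb0 => by linarith [hP b hb hb0]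
  rw [ha0, hb0, add_zero]

end QuadraticMap

open QuadraticMap in
theorem stmt15_general {n : ℕ} (q qt : QuadraticMap ℝ (Fin n → ℂ) ℝ)
    (hpsh' : ∀ x : Fin n → ℂ, 0 ≤ (qt x + qt (Complex.I • x)) / 2)
    (hle : ∀ x, qt x ≤ q x)
    (hneg : ∃ Lm : Submodule ℝ (Fin n → ℂ),
      Module.finrank ℝ Lm = n ∧ ∀ x ∈ Lm, x ≠ 0 → q x < 0) :
    (∀ x : Fin n → ℂ, (∀ y, QuadraticMap.polar qt x y = 0) → x = 0) ∧
    (∃ Lp : Submodule ℝ (Fin n → ℂ),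
      Module.finrank ℝ Lp = n ∧ ∀ x ∈ Lp, x ≠ 0 → 0 < qt x) ∧
    (∃ Lm : Submodule ℝ (Fin n → ℂ),
      Module.finrank ℝ Lm = n ∧ ∀ x ∈ Lm, x ≠ 0 → qt x < 0) := by
  obtain ⟨Lm, hLm, hqLm⟩ := hneg
  have hqtLm : ∀ x ∈ Lm, x ≠ 0 → qt x < 0 := fun x hx hx0 => (hle x).trans_lt (hqLm x hx hx0)
  let mulI : (Fin n → ℂ) ≃ₗ[ℝ] (Fin n → ℂ) :=
    (LinearEquiv.smulOfNeZero ℂ _ Complex.I Complex.I_ne_zero).restrictScalars ℝ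
  set Lp := Lm.map (mulI : (Fin n → ℂ) →ₗ[ℝ] (Fin n → ℂ))
  have hqtLp : ∀ x ∈ Lp, x ≠ 0 → 0 < qt x :=
    pos_on_map_of_neg mulI (fun x => by
      change 0 ≤ qt x + qt (Complex.I • x)
      linarith [hpsh' x]) hqtLm
  have hLp : Module.finrank ℝ Lp = n := by rw [LinearEquiv.finrank_map_eq, hLm]
  have hdim : Module.finrank ℝ (Fin n → ℂ) = n + n := by
    simp [Module.finrank_pi_fintype, Complex.finrank_real_complex, mul_two]
  have hcompl : IsCompl Lm Lp :=
    (Submodule.isCompl_iff_disjoint Lm Lp (by rw [hdim, hLm, hLp])).mpr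
      (disjoint_of_neg_of_pos hqtLm hqtLp)
  exact ⟨polar_nondegenerate_of_isCompl hcompl hqtLm hqtLp, ⟨Lp, hLp, hqtLp⟩, ⟨Lm, hLm, hqtLm⟩⟩

/-- If `q` is a plurisubharmonic quadratic form on `ℂⁿ`, nondegenerate of signature
`(n,n)` as a real quadratic form on `ℝ^(2n)`, then every plurisubharmonic quadratic
form `q̃ ≤ q` is also nondegenerate of signature `(n,n)`. -/
theorem stmt15 {n : ℕ} (q qt : QuadraticMap ℝ (Fin n → ℂ) ℝ)
    (hpsh : ∀ x : Fin n → ℂ, 0 ≤ (q x + q (Complex.I • x)) / 2)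
    (hpsh' : ∀ x : Fin n → ℂ, 0 ≤ (qt x + qt (Complex.I • x)) / 2)
    (hle : ∀ x, qt x ≤ q x)
    (hnd : ∀ x : Fin n → ℂ, (∀ y, QuadraticMap.polar q x y = 0) → x = 0)
    (hpos : ∃ Lp : Submodule ℝ (Fin n → ℂ),
      Module.finrank ℝ Lp = n ∧ ∀ x ∈ Lp, x ≠ 0 → 0 < q x)
    (hneg : ∃ Lm : Submodule ℝ (Fin n → ℂ),
      Module.finrank ℝ Lm = n ∧ ∀ x ∈ Lm, x ≠ 0 → q x < 0) :
    (∀ x : Fin n → ℂ, (∀ y, QuadraticMap.polar qt x y = 0) → x = 0) ∧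
    (∃ Lp : Submodule ℝ (Fin n → ℂ),
      Module.finrank ℝ Lp = n ∧ ∀ x ∈ Lp, x ≠ 0 → 0 < qt x) ∧
    (∃ Lm : Submodule ℝ (Fin n → ℂ),
      Module.finrank ℝ Lm = n ∧ ∀ x ∈ Lm, x ≠ 0 → qt x < 0) :=
  stmt15_general q qt hpsh' hle hneg
end
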